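/- For all x > 0, K(x) := 3x·φ(x)·Φ(x) + 2φ(x)² + (x² − 1)·Φ(x)² > 0, and hence the inverse Mills ratio G(x) = φ(x)/Φ(x) is strictly convex on (0, ∞) (i.e., G''(x) = φ(x)·K(x)/Φ(x)³ > 0). -/

import Mathlib

/-!
Writing `φ' = -x φ` and `Φ' = φ`, the inverse Mills ratio satisfies the Riccati equation
`G' = -G (x + G)`, and differentiating once more gives `G'' = G ((x + G)(x + 2G) - 1) = φ K / Φ³`.
So everything rests on `K > 0`. For `x ≥ 1` every term of `K` is nonnegative and the first is
positive. For `0 < x < 1` the elementary bounds `φ(x) ≥ φ(0)(1 - x²/2)` (from `eˣ ≥ 1 + x`) and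
`1/2 ≤ Φ(x) ≤ 1/2 + φ(0) x` (symmetry of `φ` and `φ ≤ φ(0)`) reduce `K > 0` to a polynomial
inequality in `x` and `c = φ(0) = 1/√(2π)`, which holds as soon as `8c² > 1`, i.e. `π < 4`.
-/

open MeasureTheory ProbabilityTheory Real

noncomputable def stdPDF (u : ℝ) : ℝ := (Real.sqrt (2 * Real.pi))⁻¹ * Real.exp (-u ^ 2 / 2)

noncomputable def stdCDF (u : ℝ) : ℝ := ∫ t in Set.Iic u, stdPDF t

noncomputable def G (x : ℝ) : ℝ := stdPDF x / stdCDF x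

noncomputable def K (x : ℝ) : ℝ :=
  3 * x * stdPDF x * stdCDF x + 2 * (stdPDF x) ^ 2 + (x ^ 2 - 1) * (stdCDF x) ^ 2

open Set

theorem stdPDF_eq_gaussianPDFReal : stdPDF = gaussianPDFReal 0 1 := by
  ext u
  simp [stdPDF, gaussianPDFReal]

theorem stdPDF_pos (u : ℝ) : 0 < stdPDF u := by
  unfold stdPDF
  positivity

theorem integrable_stdPDF : Integrable stdPDF :=
  stdPDF_eq_gaussianPDFReal ▸ integrable_gaussianPDFReal 0 1

theorem integral_stdPDF : ∫ u, stdPDF u = 1 :=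
  stdPDF_eq_gaussianPDFReal ▸ integral_gaussianPDFReal_eq_one 0 one_ne_zero

theorem stdPDF_neg (u : ℝ) : stdPDF (-u) = stdPDF u := by
  simp [stdPDF]

theorem stdPDF_zero : stdPDF 0 = (√(2 * π))⁻¹ := by
  simp [stdPDF]

theorem stdPDF_le_stdPDF_zero (u : ℝ) : stdPDF u ≤ stdPDF 0 := by
  rw [stdPDF_zero, stdPDF]
  exact mul_le_of_le_one_right (by positivity) (exp_le_one_iff.2 (by nlinarith [sq_nonneg u]))

theorem stdPDF_zero_mul_one_sub_le (u : ℝ) : stdPDF 0 * (1 - u ^ 2 / 2) ≤ stdPDF u := by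
  rw [stdPDF_zero, stdPDF]
  gcongr
  linarith [add_one_le_exp (-u ^ 2 / 2)]

theorem stdPDF_zero_sq : stdPDF 0 ^ 2 = (2 * π)⁻¹ := by
  rw [stdPDF_zero, inv_pow, sq_sqrt (by positivity)]

theorem hasDerivAt_stdPDF (u : ℝ) : HasDerivAt stdPDF (-u * stdPDF u) u := by
  have h : HasDerivAt (fun v : ℝ => -v ^ 2 / 2) (-u) u :=
    ((hasDerivAt_pow 2 u).neg.div_const 2).congr_deriv (by ring)
  exact (h.exp.const_mul (√(2 * π))⁻¹).congr_deriv (by rw [stdPDF]; ring)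

theorem stdCDF_pos (u : ℝ) : 0 < stdCDF u := by
  rw [stdCDF, setIntegral_pos_iff_support_of_nonneg_ae
    (.of_forall fun t => (stdPDF_pos t).le) integrable_stdPDF.integrableOn]
  simp [Function.support, (stdPDF_pos _).ne']

theorem stdCDF_zero : stdCDF 0 = 1 / 2 := by
  have hsym : stdCDF 0 = ∫ t in Ioi 0, stdPDF t := by
    rw [stdCDF, ← neg_zero, ← integral_comp_neg_Iic]
    simp only [stdPDF_neg, neg_zero]
  have htot : stdCDF 0 + ∫ t in Ioi 0, stdPDF t = 1 :=
    (intervalIntegral.integral_Iic_add_Ioi integrable_stdPDF.integrableOn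
      integrable_stdPDF.integrableOn).trans integral_stdPDF
  linarith

theorem stdCDF_sub_stdCDF (a b : ℝ) : stdCDF b - stdCDF a = ∫ t in a..b, stdPDF t :=
  intervalIntegral.integral_Iic_sub_Iic integrable_stdPDF.integrableOn
    integrable_stdPDF.integrableOn

theorem hasDerivAt_stdCDF (u : ℝ) : HasDerivAt stdCDF (stdPDF u) u := by
  have h := intervalIntegral.integral_hasDerivAt_right integrable_stdPDF.intervalIntegrable
    integrable_stdPDF.aestronglyMeasurable.stronglyMeasurableAtFilter
    (hasDerivAt_stdPDF u).continuousAt (a := 0)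
  refine (h.const_add (stdCDF 0)).congr_of_eventuallyEq (.of_forall fun v => ?_)
  simp only [← stdCDF_sub_stdCDF]; ring

theorem one_half_le_stdCDF {x : ℝ} (hx : 0 ≤ x) : 1 / 2 ≤ stdCDF x := by
  have := intervalIntegral.integral_nonneg (μ := volume) hx fun t _ => (stdPDF_pos t).le
  linarith [stdCDF_sub_stdCDF 0 x, stdCDF_zero]

theorem stdCDF_le {x : ℝ} (hx : 0 ≤ x) : stdCDF x ≤ 1 / 2 + stdPDF 0 * x := by
  have h := intervalIntegral.integral_mono_on hx integrable_stdPDF.intervalIntegrable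
    intervalIntegrable_const fun t _ => stdPDF_le_stdPDF_zero t
  rw [intervalIntegral.integral_const, smul_eq_mul, sub_zero] at h
  linarith [stdCDF_sub_stdCDF 0 x, stdCDF_zero]

-- At `x = 0` this is `2c² - 1/4`; for `c = φ(0)`, `8c² > 1` amounts to `π < 4`.
theorem K_form_bound_pos {x c : ℝ} (hx : 0 < x) (hx1 : x < 1) (hc : 0 < c)
    (hc8 : 1 < 8 * c ^ 2) :
    0 < 2 * (c * (1 - x ^ 2 / 2)) ^ 2 + 3 * x * (c * (1 - x ^ 2 / 2)) * (1 / 2)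
      + (x ^ 2 - 1) * (1 / 2 + c * x) ^ 2 := by
  nlinarith [mul_pos (mul_pos hc hc) (pow_pos hx 4), mul_pos hc (pow_pos hx 3),
    mul_pos (mul_pos hx (sub_pos.2 hx1)) (sub_pos.2 hc8)]

theorem K_form_pos_of_bounds {x c p s : ℝ} (hx : 0 < x) (hx1 : x < 1) (hc : 0 < c)
    (hc8 : 1 < 8 * c ^ 2) (hp : c * (1 - x ^ 2 / 2) ≤ p) (hs : 1 / 2 ≤ s)
    (hs' : s ≤ 1 / 2 + c * x) :
    0 < 3 * x * p * s + 2 * p ^ 2 + (x ^ 2 - 1) * s ^ 2 := by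
  have hp0 : 0 ≤ c * (1 - x ^ 2 / 2) := mul_nonneg hc.le (by nlinarith)
  have hps : 3 * x * (c * (1 - x ^ 2 / 2)) * (1 / 2) ≤ 3 * x * p * s := by
    gcongr
    nlinarith
  have hp2 : (c * (1 - x ^ 2 / 2)) ^ 2 ≤ p ^ 2 := by gcongr
  have hs2 : (1 - x ^ 2) * s ^ 2 ≤ (1 - x ^ 2) * (1 / 2 + c * x) ^ 2 := by
    have : 0 ≤ 1 - x ^ 2 := by nlinarith
    gcongr
  linarith [K_form_bound_pos hx hx1 hc hc8]

theorem K_pos {x : ℝ} (hx : 0 < x) : 0 < K x := by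
  rcases le_or_gt 1 x with hx1 | hx1
  · have : 0 ≤ x ^ 2 - 1 := by nlinarith
    have := stdPDF_pos x
    have := stdCDF_pos x
    unfold K
    positivity
  have hc := stdPDF_pos 0
  have hc8 : 1 < 8 * stdPDF 0 ^ 2 := by
    rw [stdPDF_zero_sq, ← div_eq_mul_inv, one_lt_div (by positivity)]
    linarith [pi_lt_four]
  exact K_form_pos_of_bounds hx hx1 hc hc8 (stdPDF_zero_mul_one_sub_le x)
    (one_half_le_stdCDF hx.le) (stdCDF_le hx.le)

theorem hasDerivAt_G (x : ℝ) : HasDerivAt G (-G x * (x + G x)) x := by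
  have hΦ := (stdCDF_pos x).ne'
  refine ((hasDerivAt_stdPDF x).div (hasDerivAt_stdCDF x) hΦ).congr_deriv ?_
  simp only [G]
  field_simp
  ring

theorem deriv_deriv_G (x : ℝ) : deriv (deriv G) x = stdPDF x * K x / stdCDF x ^ 3 := by
  have hG' : deriv G = fun v => -G v * (v + G v) := funext fun v => (hasDerivAt_G v).deriv
  have h := (hasDerivAt_G x).fun_neg.fun_mul ((hasDerivAt_id' x).fun_add (hasDerivAt_G x))
  rw [hG', h.deriv]
  have hΦ := (stdCDF_pos x).ne'
  simp only [G, K]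
  field_simp
  ring

/-- `K(x) > 0` for `x > 0`, hence the inverse Mills ratio is strictly convex on `(0, ∞)`. -/
theorem inverseMills_strictConvex :
    (∀ x : ℝ, 0 < x → 0 < K x) ∧
      (∀ x : ℝ, 0 < x →
        deriv (deriv G) x = stdPDF x * K x / (stdCDF x) ^ 3 ∧ 0 < deriv (deriv G) x) ∧
      StrictConvexOn ℝ (Set.Ioi 0) G := by
  have hG'' : ∀ x : ℝ, 0 < x → 0 < deriv (deriv G) x := fun x hx => by
    rw [deriv_deriv_G]
    exact div_pos (mul_pos (stdPDF_pos x) (K_pos hx)) (pow_pos (stdCDF_pos x) 3)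
  refine ⟨fun x hx => K_pos hx, fun x hx => ⟨deriv_deriv_G x, hG'' x hx⟩, ?_⟩
  refine strictConvexOn_of_deriv2_pos' (convex_Ioi 0) ?_ fun x hx => ?_
  · exact HasDerivAt.continuousOn fun x _ => hasDerivAt_G x
  · simpa only [Function.iterate_succ, Function.iterate_zero, Function.id_comp,
      Function.comp_apply] using hG'' x hx
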